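/- With the setup of the invariance lemma, if f : G → ℝ is supported in the finite connected set A ∋ e and satisfies P_A f = λ f, then σ = ν_{A,dA} * f satisfies σ * μ̃ = λ σ in the group algebra of H ≀ G. Consequently, if σ ≠ 0, the right convolution operator by μ̃ on ℓ²(H ≀ G) has λ as an eigenvalue with a finitely supported eigenfunction. -/

import Mathlib

open Function MonoidAlgebra
open scoped Classical
set_option linter.unusedSectionVars false

noncomputable section

variable (G H : Type) [Group G] [Group H] [Fintype H]

/-- The automorphism `L_g` of the full group of configurations `G → H`,
`(L_g η)(x) = η (g⁻¹ x)`. -/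
def lampAut (g : G) : (G → H) ≃* (G → H) where
  toFun η := fun x => η (g⁻¹ * x)
  invFun η := fun x => η (g * x)
  left_inv η := by funext x; simp [← mul_assoc]
  right_inv η := by funext x; simp [← mul_assoc]
  map_mul' η η' := rfl

/-- The action homomorphism `G →* MulAut (G → H)`. -/
def lampHom : G →* MulAut (G → H) where
  toFun := lampAut G H
  map_one' := by ext η x; simp [lampAut]
  map_mul' g₁ g₂ := by ext η x; simp [lampAut, MulAut.mul_apply, mul_assoc]

/-- The unrestricted wreath product `(H^G) ⋊ G`. -/
abbrev WrFull := (G → H) ⋊[lampHom G H] G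

/-- The (restricted) wreath product `H ≀ G = (⊕_G H) ⋊ G`, realized as the
subgroup of the unrestricted wreath product consisting of the elements whose
configuration has finite support. -/
def Wreath : Subgroup (WrFull G H) where
  carrier := {w | (mulSupport w.left).Finite}
  one_mem' := by
    simp only [Set.mem_setOf_eq, SemidirectProduct.one_left]
    simp [mulSupport]
  mul_mem' := by
    intro a b ha hb
    simp only [Set.mem_setOf_eq, SemidirectProduct.mul_left] at *
    refine (ha.union ?_).subset (mulSupport_mul _ _)
    have : mulSupport (lampHom G H a.right b.left) =
        (fun x => (a.right)⁻¹ * x) ⁻¹' mulSupport b.left := by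
      ext x
      simp [lampHom, lampAut, mulSupport]
    rw [this]
    exact hb.preimage (by
      intro x _ y _ h
      simpa using mul_left_cancel h)
  inv_mem' := by
    intro a ha
    simp only [Set.mem_setOf_eq, SemidirectProduct.inv_left] at *
    have : mulSupport (lampHom G H (a.right)⁻¹ (a.left)⁻¹) =
        (fun x => a.right * x) ⁻¹' mulSupport a.left := by
      ext x
      simp [lampHom, lampAut, mulSupport]
    rw [this]
    exact ha.preimage (by
      intro x _ y _ h
      simpa using mul_left_cancel h)

/-- The configuration which has state `h` at the point `g` and is trivial
elsewhere. -/
def pointConf (g : G) (h : H) : G → H := fun x => if x = g then h else 1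

lemma pointConf_finite (g : G) (h : H) : (mulSupport (pointConf G H g h)).Finite := by
  apply (Set.finite_singleton g).subset
  intro x hx
  by_contra hxg
  simp only [Set.mem_singleton_iff] at hxg
  simp [mulSupport, pointConf, hxg] at hx

/-- A finitely supported configuration together with a position, as an
element of the wreath product. -/
def wr (η : G → H) (hη : (mulSupport η).Finite) (g : G) : Wreath G H :=
  ⟨⟨η, g⟩, hη⟩

/-- The embedding of the base group `G` in the wreath product, `g ↦ (1, g)`. -/
def embG (g : G) : Wreath G H :=
  wr G H 1 (by simp [mulSupport]) g

/-- The embedding of the lamp group `H` in the wreath product,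
`h ↦ (η_e^h, e)`. -/
def embH (h : H) : Wreath G H :=
  wr G H (pointConf G H 1 h) (pointConf_finite G H 1 h) 1

/-- The point mass `δ_g` at the embedded element `g ∈ G`, as an element of the
group algebra of the wreath product. -/
def deltaG (g : G) : MonoidAlgebra ℝ (Wreath G H) :=
  MonoidAlgebra.single (embG G H g) 1

/-- The uniform probability measure `ν` on the embedded copy of `H` inside the
wreath product. -/
def nu : MonoidAlgebra ℝ (Wreath G H) :=
  ∑ h : H, MonoidAlgebra.single (embH G H h) ((Fintype.card H : ℝ)⁻¹)

/-- The translated uniform measure `ν_g = δ_g * ν * δ_{g⁻¹}`. -/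
def nuAt (g : G) : MonoidAlgebra ℝ (Wreath G H) :=
  deltaG G H g * nu G H * deltaG G H g⁻¹

/-- The complementary projection `ν̄_g = δ_{(1,e)} - ν_g`. -/
def nuBarAt (g : G) : MonoidAlgebra ℝ (Wreath G H) :=
  1 - nuAt G H g

end

/-- The Cayley graph of `G` with respect to `S` (for symmetric `S` the second
condition in the adjacency is redundant). -/
def cayley (G : Type) [Group G] (S : Finset G) : SimpleGraph G where
  Adj x y := x ≠ y ∧ x⁻¹ * y ∈ S ∧ y⁻¹ * x ∈ S
  symm := ⟨by
    intro x y h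
    exact ⟨h.1.symm, h.2.2, h.2.1⟩⟩
  loopless := ⟨fun x h => h.1 rfl⟩

/-- The outer vertex boundary of the finite set `A` in the Cayley graph of `G`
with respect to the (symmetric) set `S`: all vertices outside `A` with a
neighbour in `A`. -/
noncomputable def cayleyBoundary (G : Type) [Group G] (S A : Finset G) : Finset G :=
  (A.biUnion fun x => S.image fun s => x * s).filter (· ∉ A)

/-!
`ν_{A,∂A}` is a product of commuting idempotents, so it absorbs `ν_a` for `a ∈ A` and is
annihilated by `ν_b` for `b ∈ ∂A`. Since `δ_g ν = ν_g δ_g`, right multiplication of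
`ν_{A,∂A} δ_g` by `ν` is the identity for `g ∈ A` and zero for `g ∈ ∂A`. Hence, with
`ι : ℝ[G] → ℝ[H ≀ G]` induced by the inclusion,
`σ μ̃ = ν_{A,∂A} ι(f) ν ι(μ) ν = ν_{A,∂A} ι(f * μ) ν = ν_{A,∂A} ι((f * μ)|_A)`,
because `f * μ` lives on `A ∪ ∂A`; and by the symmetry of `μ`, `(f * μ)|_A = P_A f = λ f`.
-/

namespace Finset

variable {ι M : Type*} [DecidableEq ι]

lemma noncommProd_mul_of_isIdempotentElem [Monoid M] (s : Finset ι) (f : ι → M) (comm)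
    {i : ι} (hi : i ∈ s) (hf : IsIdempotentElem (f i)) :
    s.noncommProd f comm * f i = s.noncommProd f comm := by
  rw [← noncommProd_erase_mul s hi f comm, mul_assoc, hf.eq]

lemma noncommProd_mul_eq_zero [MonoidWithZero M] (s : Finset ι) (f : ι → M) (comm)
    {i : ι} (hi : i ∈ s) {y : M} (hy : f i * y = 0) :
    s.noncommProd f comm * y = 0 := by
  rw [← noncommProd_erase_mul s hi f comm, mul_assoc, hy, mul_zero]

end Finset

lemma MonoidAlgebra.isIdempotentElem_sum_single_inv_card {H M : Type*} [Group H] [Fintype H]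
    [Monoid M] (φ : H →* M) :
    IsIdempotentElem
      (∑ h : H, single (φ h) ((Fintype.card H : ℝ)⁻¹) : MonoidAlgebra ℝ M) := by
  set c := (Fintype.card H : ℝ)⁻¹
  have hc : (Fintype.card H : ℝ) * c = 1 :=
    mul_inv_cancel₀ (Nat.cast_ne_zero.2 Fintype.card_ne_zero)
  have row : ∀ h : H, single (φ h) c * ∑ h' : H, single (φ h') c =
      ∑ k : H, single (φ k) (c * c) := fun h => by
    rw [Finset.mul_sum]
    exact Fintype.sum_equiv (Equiv.mulLeft h) _ _ fun h' => by simp [single_mul_single]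
  rw [IsIdempotentElem, Finset.sum_mul, Finset.sum_congr rfl fun h _ => row h, Finset.sum_const,
    Finset.card_univ, ← Nat.cast_smul_eq_nsmul ℝ, Finset.smul_sum]
  simp_rw [smul_single', ← mul_assoc, hc, one_mul]

namespace MonoidAlgebra

variable {k M : Type*} [Semiring k]

noncomputable def restrictTo (A : Finset M) (x : MonoidAlgebra k M) : MonoidAlgebra k M :=
  ∑ a ∈ A, single a (x.coeff a)

lemma restrictTo_eq_self {A : Finset M} {x : MonoidAlgebra k M} (hx : x.coeff.support ⊆ A) :
    restrictTo A x = x := by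
  conv_rhs => rw [← sum_coeff_single x, Finsupp.sum_of_support_subset _ hx _ (by simp)]
  rfl

lemma restrictTo_add_restrictTo [DecidableEq M] {A B : Finset M} (hAB : Disjoint A B)
    {x : MonoidAlgebra k M} (hx : x.coeff.support ⊆ A ∪ B) :
    restrictTo A x + restrictTo B x = x := by
  rw [restrictTo, restrictTo, ← Finset.sum_union hAB]
  exact restrictTo_eq_self hx

end MonoidAlgebra

lemma MonoidAlgebra.restrictTo_mul_eq_sum {k G : Type*} [CommSemiring k] [Group G]
    {A : Finset G} {f μ : MonoidAlgebra k G} (hμ : ∀ g, μ.coeff g⁻¹ = μ.coeff g)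
    (hf : f.coeff.support ⊆ A) :
    restrictTo A (f * μ) = ∑ x ∈ A, single x (∑ y ∈ A, μ.coeff (x⁻¹ * y) * f.coeff y) := by
  refine Finset.sum_congr rfl fun x _ => congrArg (single x) ?_
  rw [coeff_mul_apply_left, Finsupp.sum_of_support_subset _ hf _ (by simp)]
  refine Finset.sum_congr rfl fun y _ => ?_
  rw [mul_comm, ← hμ, mul_inv_rev, inv_inv]

section CayleyBoundary

variable {G : Type} [Group G] {S A : Finset G}

lemma disjoint_cayleyBoundary : Disjoint A (cayleyBoundary G S A) :=
  Finset.disjoint_right.2 fun _ hx => (Finset.mem_filter.1 hx).2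

lemma support_mul_subset_union_cayleyBoundary {k : Type*} [Semiring k] {f μ : MonoidAlgebra k G}
    (hf : f.coeff.support ⊆ A) (hμ : μ.coeff.support ⊆ S) :
    (f * μ).coeff.support ⊆ A ∪ cayleyBoundary G S A := by
  intro x hx
  obtain ⟨g, hg, s, hs, rfl⟩ := Finset.mem_mul.1 (support_coeff_mul_subset f μ hx)
  by_cases hgs : g * s ∈ A
  · exact Finset.mem_union_left _ hgs
  · exact Finset.mem_union_right _ <| Finset.mem_filter.2
      ⟨Finset.mem_biUnion.2 ⟨g, hf hg, Finset.mem_image.2 ⟨s, hμ hs, rfl⟩⟩, hgs⟩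

end CayleyBoundary

noncomputable section Wreath

variable {G H : Type} [Group G] [Group H]

def embGHom : G →* Wreath G H where
  toFun := embG G H
  map_one' := rfl
  map_mul' g₁ g₂ := Subtype.ext <| SemidirectProduct.ext (by simp [embG, wr]) rfl

@[simp]
lemma embGHom_apply (g : G) : (embGHom g : Wreath G H) = embG G H g := rfl

lemma deltaG_mul (a b : G) : deltaG G H a * deltaG G H b = deltaG G H (a * b) := by
  rw [deltaG, deltaG, deltaG, single_mul_single, mul_one, ← embGHom_apply, ← embGHom_apply,
    ← embGHom_apply, map_mul]

lemma deltaG_one : deltaG G H (1 : G) = 1 := rfl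

def liftG : MonoidAlgebra ℝ G →ₐ[ℝ] MonoidAlgebra ℝ (Wreath G H) :=
  mapDomainAlgHom ℝ ℝ embGHom

lemma liftG_single (g : G) (r : ℝ) : liftG (single g r) = r • deltaG G H g := by
  simp [liftG, deltaG]

variable [Fintype H]

def lampAt (a : G) : H →* Wreath G H where
  toFun h := wr G H (pointConf G H a h) (pointConf_finite G H a h) 1
  map_one' := Subtype.ext <| SemidirectProduct.ext (by funext x; simp [wr, pointConf]) rfl
  map_mul' h₁ h₂ := Subtype.ext <| SemidirectProduct.ext
    (by funext x; by_cases hx : x = a <;> simp [wr, pointConf, hx]) (mul_one 1).symm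

lemma embG_mul_lampAt_one_mul_embG_inv (a : G) (h : H) :
    embG G H a * lampAt 1 h * embG G H a⁻¹ = lampAt a h := by
  refine Subtype.ext <| SemidirectProduct.ext ?_ (by simp [embG, wr, lampAt])
  change 1 * lampHom G H a (pointConf G H 1 h) * lampHom G H (a * 1) 1 = pointConf G H a h
  funext x
  by_cases hx : x = a
  · simp [pointConf, lampHom, lampAut, hx]
  · simp [pointConf, lampHom, lampAut, hx, inv_mul_eq_one, Ne.symm hx]

lemma commute_lampAt {a b : G} (hab : a ≠ b) (h h' : H) :
    Commute (lampAt a h) (lampAt b h') := by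
  refine Subtype.ext <| SemidirectProduct.ext ?_ (by simp [lampAt, wr])
  funext x
  by_cases hx : x = a
  · simp [lampAt, wr, pointConf, hx, hab]
  · simp [lampAt, wr, pointConf, hx]

lemma nuAt_eq_sum (a : G) :
    nuAt G H a = ∑ h : H, single (lampAt a h) ((Fintype.card H : ℝ)⁻¹) := by
  simp only [nuAt, nu, deltaG, Finset.mul_sum, Finset.sum_mul, single_mul_single, one_mul, mul_one]
  exact Finset.sum_congr rfl fun h _ => by rw [← embG_mul_lampAt_one_mul_embG_inv]; rfl

lemma isIdempotentElem_nuAt (a : G) : IsIdempotentElem (nuAt G H a) := by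
  rw [nuAt_eq_sum]
  exact isIdempotentElem_sum_single_inv_card (lampAt a)

lemma commute_nuAt (a b : G) : Commute (nuAt G H a) (nuAt G H b) := by
  rcases eq_or_ne a b with rfl | hab
  · exact Commute.refl _
  rw [nuAt_eq_sum, nuAt_eq_sum]
  refine Commute.sum_right _ _ _ fun h _ => Commute.sum_left _ _ _ fun h' _ => ?_
  simp only [Commute, SemiconjBy, single_mul_single, (commute_lampAt hab h' h).eq]

lemma commute_nuAt_nuBarAt (a b : G) : Commute (nuAt G H a) (nuBarAt G H b) :=
  (Commute.one_right _).sub_right (commute_nuAt a b)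

lemma nuBarAt_mul_nuAt (a : G) : nuBarAt G H a * nuAt G H a = 0 := by
  rw [nuBarAt, sub_mul, one_mul, (isIdempotentElem_nuAt a).eq, sub_self]

lemma deltaG_mul_nu (g : G) : deltaG G H g * nu G H = nuAt G H g * deltaG G H g := by
  rw [nuAt, mul_assoc _ (deltaG G H g⁻¹), deltaG_mul, inv_mul_cancel, deltaG_one, mul_one]

/-- The paper's `ν_{A,∂A}` is `nuProj A (cayleyBoundary G S A) _ _`. -/
def nuProj (A B : Finset G)
    (hA : (A : Set G).Pairwise fun a b => Commute (nuAt G H a) (nuAt G H b))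
    (hB : (B : Set G).Pairwise fun a b => Commute (nuBarAt G H a) (nuBarAt G H b)) :
    MonoidAlgebra ℝ (Wreath G H) :=
  A.noncommProd (nuAt G H) hA * B.noncommProd (nuBarAt G H) hB

variable {A B : Finset G}
  {hA : (A : Set G).Pairwise fun a b => Commute (nuAt G H a) (nuAt G H b)}
  {hB : (B : Set G).Pairwise fun a b => Commute (nuBarAt G H a) (nuBarAt G H b)}

lemma nuProj_mul_nuAt_of_mem_left {a : G} (ha : a ∈ A) :
    nuProj A B hA hB * nuAt G H a = nuProj A B hA hB := by
  have hcomm : Commute (nuAt G H a) (B.noncommProd (nuBarAt G H) hB) :=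
    Finset.noncommProd_commute _ _ _ _ fun b _ => commute_nuAt_nuBarAt a b
  rw [nuProj, mul_assoc, ← hcomm.eq, ← mul_assoc,
    Finset.noncommProd_mul_of_isIdempotentElem _ _ _ ha (isIdempotentElem_nuAt a)]

lemma nuProj_mul_nuAt_of_mem_right {b : G} (hb : b ∈ B) :
    nuProj A B hA hB * nuAt G H b = 0 := by
  rw [nuProj, mul_assoc, Finset.noncommProd_mul_eq_zero _ _ _ hb (nuBarAt_mul_nuAt b), mul_zero]

lemma mul_liftG_restrictTo_mul_nu (R : MonoidAlgebra ℝ (Wreath G H)) (x : MonoidAlgebra ℝ G) :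
    R * liftG (restrictTo A x) * nu G H =
      ∑ a ∈ A, x.coeff a • (R * nuAt G H a * deltaG G H a) := by
  simp only [restrictTo, map_sum, liftG_single, Finset.mul_sum, Finset.sum_mul, mul_smul_comm,
    smul_mul_assoc, mul_assoc, deltaG_mul_nu]

lemma mul_liftG_restrictTo_mul_nu_of_forall_mem {R : MonoidAlgebra ℝ (Wreath G H)}
    (hR : ∀ a ∈ A, R * nuAt G H a = R) (x : MonoidAlgebra ℝ G) :
    R * liftG (restrictTo A x) * nu G H = R * liftG (restrictTo A x) := by
  rw [mul_liftG_restrictTo_mul_nu]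
  simp +contextual only [hR, restrictTo, map_sum, liftG_single, Finset.mul_sum, mul_smul_comm]

lemma mul_liftG_restrictTo_mul_nu_eq_zero {R : MonoidAlgebra ℝ (Wreath G H)}
    (hR : ∀ b ∈ B, R * nuAt G H b = 0) (x : MonoidAlgebra ℝ G) :
    R * liftG (restrictTo B x) * nu G H = 0 := by
  rw [mul_liftG_restrictTo_mul_nu]
  simp +contextual only [hR, zero_mul, smul_zero, Finset.sum_const_zero]

end Wreath

theorem eigenfunction_lemma_general (G H : Type) [Group G] [Group H] [Fintype H]
    (S : Finset G)
    (μ : MonoidAlgebra ℝ G)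
    (hμsupp : ↑μ.coeff.support ⊆ (S : Set G)) (hμsym : ∀ g : G, μ.coeff g⁻¹ = μ.coeff g)
    (A : Finset G)
    (hcA : (A : Set G).Pairwise fun a b => Commute (nuAt G H a) (nuAt G H b))
    (hcdA : ((cayleyBoundary G S A : Finset G) : Set G).Pairwise
      fun a b => Commute (nuBarAt G H a) (nuBarAt G H b))
    (f : MonoidAlgebra ℝ G) (hf : ↑f.coeff.support ⊆ (A : Set G))
    (lam : ℝ)
    (heig : ∑ x ∈ A, MonoidAlgebra.single x (∑ y ∈ A, μ.coeff (x⁻¹ * y) * f.coeff y)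
      = lam • f) :
    ((A.noncommProd (nuAt G H) hcA *
        (cayleyBoundary G S A).noncommProd (nuBarAt G H) hcdA) *
      (show MonoidAlgebra ℝ (Wreath G H) from MonoidAlgebra.ofCoeff (Finsupp.mapDomain (embG G H) f.coeff))) *
      (nu G H * (show MonoidAlgebra ℝ (Wreath G H) from
          MonoidAlgebra.ofCoeff (Finsupp.mapDomain (embG G H) μ.coeff)) * nu G H)
    = lam • ((A.noncommProd (nuAt G H) hcA *
        (cayleyBoundary G S A).noncommProd (nuBarAt G H) hcdA) *
      (show MonoidAlgebra ℝ (Wreath G H) from MonoidAlgebra.ofCoeff (Finsupp.mapDomain (embG G H) f.coeff)))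
    ∧ (((A.noncommProd (nuAt G H) hcA *
          (cayleyBoundary G S A).noncommProd (nuBarAt G H) hcdA) *
        (show MonoidAlgebra ℝ (Wreath G H) from MonoidAlgebra.ofCoeff (Finsupp.mapDomain (embG G H) f.coeff)))
          ≠ 0 →
      ∃ F : MonoidAlgebra ℝ (Wreath G H), F ≠ 0 ∧
        F * (nu G H * (show MonoidAlgebra ℝ (Wreath G H) from
            MonoidAlgebra.ofCoeff (Finsupp.mapDomain (embG G H) μ.coeff)) * nu G H) = lam • F) := by
  set R := nuProj A (cayleyBoundary G S A) hcA hcdA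
  have hfA : restrictTo A f = f := restrictTo_eq_self (Finset.coe_subset.1 hf)
  have hfμ : restrictTo A (f * μ) + restrictTo (cayleyBoundary G S A) (f * μ) = f * μ :=
    restrictTo_add_restrictTo disjoint_cayleyBoundary <|
      support_mul_subset_union_cayleyBoundary (Finset.coe_subset.1 hf) (Finset.coe_subset.1 hμsupp)
  have hRA : ∀ a ∈ A, R * nuAt G H a = R := fun _ => nuProj_mul_nuAt_of_mem_left
  have hRB : ∀ b ∈ cayleyBoundary G S A, R * nuAt G H b = 0 :=
    fun _ => nuProj_mul_nuAt_of_mem_right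
  have key : R * liftG f * (nu G H * liftG μ * nu G H) = lam • (R * liftG f) := calc
    R * liftG f * (nu G H * liftG μ * nu G H)
        = R * liftG (restrictTo A f) * nu G H * liftG μ * nu G H := by simp only [hfA, mul_assoc]
    _ = R * liftG (f * μ) * nu G H := by
        rw [mul_liftG_restrictTo_mul_nu_of_forall_mem hRA, hfA, map_mul, mul_assoc R]
    _ = R * liftG (restrictTo A (f * μ)) := by
        conv_lhs => rw [← hfμ]
        rw [map_add, mul_add, add_mul, mul_liftG_restrictTo_mul_nu_of_forall_mem hRA,
          mul_liftG_restrictTo_mul_nu_eq_zero hRB, add_zero]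
    _ = lam • (R * liftG f) := by
        rw [restrictTo_mul_eq_sum hμsym (Finset.coe_subset.1 hf), heig, map_smul, mul_smul_comm]
  exact ⟨key, fun hσ => ⟨_, hσ, key⟩⟩

/-- In the setting of the invariance lemma, if `f` is
supported in the finite connected set `A ∋ e` and `P_A f = λ f`, then
`σ = ν_{A,dA} * f` satisfies `σ * μ̃ = λ σ`; consequently, if `σ ≠ 0`, then
`λ` is an eigenvalue of right convolution by `μ̃` on `ℓ²(H ≀ G)` with a
finitely supported eigenfunction. -/
theorem eigenfunction_lemma (G H : Type) [Group G] [Group H] [Fintype H]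
    (S : Finset G) (hS : ∀ s ∈ S, s⁻¹ ∈ S)
    (μ : MonoidAlgebra ℝ G) (hμpos : ∀ g : G, 0 ≤ μ.coeff g)
    (hμsupp : ↑μ.coeff.support ⊆ (S : Set G)) (hμsym : ∀ g : G, μ.coeff g⁻¹ = μ.coeff g)
    (hμprob : ∑ g ∈ μ.coeff.support, μ.coeff g = 1)
    (A : Finset G) (h1A : (1 : G) ∈ A)
    (hAconn : ((cayley G S).induce (A : Set G)).Connected)
    (hcA : (A : Set G).Pairwise fun a b => Commute (nuAt G H a) (nuAt G H b))
    (hcdA : ((cayleyBoundary G S A : Finset G) : Set G).Pairwise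
      fun a b => Commute (nuBarAt G H a) (nuBarAt G H b))
    (f : MonoidAlgebra ℝ G) (hf : ↑f.coeff.support ⊆ (A : Set G))
    (lam : ℝ)
    (heig : ∑ x ∈ A, MonoidAlgebra.single x (∑ y ∈ A, μ.coeff (x⁻¹ * y) * f.coeff y)
      = lam • f) :
    ((A.noncommProd (nuAt G H) hcA *
        (cayleyBoundary G S A).noncommProd (nuBarAt G H) hcdA) *
      (show MonoidAlgebra ℝ (Wreath G H) from MonoidAlgebra.ofCoeff (Finsupp.mapDomain (embG G H) f.coeff))) *
      (nu G H * (show MonoidAlgebra ℝ (Wreath G H) from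
          MonoidAlgebra.ofCoeff (Finsupp.mapDomain (embG G H) μ.coeff)) * nu G H)
    = lam • ((A.noncommProd (nuAt G H) hcA *
        (cayleyBoundary G S A).noncommProd (nuBarAt G H) hcdA) *
      (show MonoidAlgebra ℝ (Wreath G H) from MonoidAlgebra.ofCoeff (Finsupp.mapDomain (embG G H) f.coeff)))
    ∧ (((A.noncommProd (nuAt G H) hcA *
          (cayleyBoundary G S A).noncommProd (nuBarAt G H) hcdA) *
        (show MonoidAlgebra ℝ (Wreath G H) from MonoidAlgebra.ofCoeff (Finsupp.mapDomain (embG G H) f.coeff)))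
          ≠ 0 →
      ∃ F : MonoidAlgebra ℝ (Wreath G H), F ≠ 0 ∧
        F * (nu G H * (show MonoidAlgebra ℝ (Wreath G H) from
            MonoidAlgebra.ofCoeff (Finsupp.mapDomain (embG G H) μ.coeff)) * nu G H) = lam • F) :=
  eigenfunction_lemma_general G H S μ hμsupp hμsym A hcA hcdA f hf lam heig
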